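/- (Null form estimate via good derivatives.) For sufficiently smooth functions u, v on ℝ^{1+3}, pointwise for x ≠ 0: |∂_α u ∂^α v| + Σ_{α,β}|∂_α u ∂_β v − ∂_α v ∂_β u| ≲ Σ_a(|G_a u| |∂v| + |G_a v| |∂u|), where G_a = (x_a/|x|)∂_t + ∂_a and ∂u, ∂v denote the full collection of first-order spacetime derivatives. -/
import Mathlib


noncomputable section

open MeasureTheory Finset Real

/-- Spacetime functions on `ℝ^{1+3}`: time × space → ℝ. -/
abbrev Fn : Type := ℝ → (Fin 3 → ℝ) → ℝ

/-- Time derivative `∂_t`. -/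
def pt (u : Fn) : Fn := fun t x => deriv (fun s => u s x) t

/-- Spatial derivative `∂_a`. -/
def px (a : Fin 3) (u : Fn) : Fn := fun t x => fderiv ℝ (fun y => u t y) x (Pi.single a 1)

/-- Euclidean radius `r = |x|`. -/
def rad (x : Fin 3 → ℝ) : ℝ := Real.sqrt (∑ a, x a ^ 2)

/-- Japanese bracket `⟨A⟩ = √(1+A²)`. -/
def jb (A : ℝ) : ℝ := Real.sqrt (1 + A ^ 2)

/-- d'Alembertian `□ = −∂_t² + Δ`. -/
def box (u : Fn) : Fn := fun t x => - pt (pt u) t x + ∑ a, px a (px a u) t x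

/-- Spatial Laplacian `Δ`. -/
def lap (u : Fn) : Fn := fun t x => ∑ a, px a (px a u) t x

/-- Lorentz boosts `L_a = x_a ∂_t + t ∂_a`. -/
def Lb (a : Fin 3) (u : Fn) : Fn := fun t x => x a * pt u t x + t * px a u t x

/-- Rotations `Ω_{ab} = x_a ∂_b − x_b ∂_a`. -/
def Om (a b : Fin 3) (u : Fn) : Fn := fun t x => x a * px b u t x - x b * px a u t x

/-- Scaling field `L₀ = t ∂_t + r ∂_r`. -/
def L0 (u : Fn) : Fn := fun t x => t * pt u t x + ∑ a, x a * px a u t x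

/-- Good derivatives `G_a = (x_a/r) ∂_t + ∂_a`. -/
def Ga (a : Fin 3) (u : Fn) : Fn := fun t x => (x a / rad x) * pt u t x + px a u t x

/-- Semi-hyperboloidal derivatives `∂̲_a = (x^a/t) ∂_t + ∂_a`. -/
def ub (a : Fin 3) (u : Fn) : Fn := fun t x => (x a / t) * pt u t x + px a u t x

/-- Spacetime derivatives `∂_α`, `α = 0,…,3`. -/
def pd (α : Fin 4) : Fn → Fn :=
  match α with
  | ⟨0, _⟩ => pt
  | ⟨1, _⟩ => px 0
  | ⟨2, _⟩ => px 1
  | ⟨3, _⟩ => px 2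

/-- `|∂u| `: the full collection of first-order spacetime derivatives. -/
def absD (u : Fn) : Fn := fun t x => |pt u t x| + ∑ a, |px a u t x|

/-- The admissible vector fields `V = {∂_α, L_a, Ω_{ab}}`. -/
inductive VF : Type
  | d : Fin 4 → VF
  | L : Fin 3 → VF
  | O : Fin 3 → Fin 3 → VF
  deriving DecidableEq, Fintype

/-- Application of a vector field. -/
def VF.apply : VF → Fn → Fn
  | .d α => pd α
  | .L a => Lb a
  | .O a b => Om a b

/-- `Γ^I`: application of a product of vector fields. -/
def applyI : List VF → Fn → Fn
  | [], u => u
  | v :: I, u => v.apply (applyI I u)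

/-- Sum over all multi-indices `I` of length `≤ k` of fields in `V`. -/
def sumI (k : ℕ) (F : List VF → ℝ) : ℝ :=
  ∑ n ∈ Finset.range (k + 1), ∑ I : Fin n → VF, F (List.ofFn I)

/-- `L²` norm on `ℝ³`. -/
def L2 (f : (Fin 3 → ℝ) → ℝ) : ℝ := Real.sqrt (∫ x, f x ^ 2)

/-- "Sufficiently nice": smooth on spacetime. -/
def Smth (u : Fn) : Prop := ContDiff ℝ (⊤ : ℕ∞) (fun p : ℝ × (Fin 3 → ℝ) => u p.1 p.2)

/-- Natural energy `E_m(t,v)`. -/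
def energy (m : ℝ) (u : Fn) (t : ℝ) : ℝ :=
  ∫ x, (pt u t x ^ 2 + ∑ a, px a u t x ^ 2 + m ^ 2 * u t x ^ 2)

/-- Conformal energy `E_con(t,u)`. -/
def Econ (u : Fn) (t : ℝ) : ℝ :=
  L2 (u t) ^ 2 + L2 (L0 u t) ^ 2
    + (∑ a, ∑ b, if a < b then L2 (Om a b u t) ^ 2 else 0)
    + ∑ a, L2 (Lb a u t) ^ 2

/-- Ghost weight energy `E_{gst,m}(t,v)` (with starting time `t₀` and ghost parameter `δ`). -/
def Egst (t₀ δ m : ℝ) (u : Fn) (t : ℝ) : ℝ :=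
  (∫ x, (pt u t x ^ 2 + ∑ a, px a u t x ^ 2 + m ^ 2 * u t x ^ 2))
    + m ^ 2 * ∫ t' in t₀..t, ∫ x, u t' x ^ 2 / jb (rad x - t') ^ (1 + δ)
    + ∑ a, ∫ t' in t₀..t, ∫ x, Ga a u t' x ^ 2 / jb (rad x - t') ^ (1 + δ)

/-- Spatial derivative of a function of `x` only. -/
def pxs (a : Fin 3) (g : (Fin 3 → ℝ) → ℝ) : (Fin 3 → ℝ) → ℝ :=
  fun x => fderiv ℝ g x (Pi.single a 1)

/-- `∂^I` for a spatial multi-index. -/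
def applyD : List (Fin 3) → ((Fin 3 → ℝ) → ℝ) → ((Fin 3 → ℝ) → ℝ)
  | [], g => g
  | a :: I, g => pxs a (applyD I g)

/-- Sum over all spatial multi-indices of length `≤ k`. -/
def sumD (k : ℕ) (F : List (Fin 3) → ℝ) : ℝ :=
  ∑ n ∈ Finset.range (k + 1), ∑ I : Fin n → Fin 3, F (List.ofFn I)

/-- The smallness condition on the initial data of the main theorem. -/
def dataSmall (N : ℕ) (E₀ E₁ : Fin 3 → (Fin 3 → ℝ) → ℝ) (n₀ n₁ : (Fin 3 → ℝ) → ℝ) (ε : ℝ) : Prop :=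
  sumD (N + 2) (fun I => ∑ i, L2 fun x => jb (rad x) ^ (I.length + 1) * applyD I (E₀ i) x)
    + sumD (N + 1) (fun I => ∑ i, L2 fun x => jb (rad x) ^ (I.length + 2) * applyD I (E₁ i) x)
    + sumD (N + 1) (fun I => L2 fun x => jb (rad x) ^ I.length * applyD I n₀ x)
    + sumD N (fun I => L2 fun x => jb (rad x) ^ (I.length + 1) * applyD I n₁ x) ≤ ε

/-- The `X`-norm of a pair `(Ψ, φ)`. -/
def Xnorm (t₀ δ : ℝ) (N : ℕ) (Ψ : Fin 3 → Fn) (φ : Fn) : ℝ :=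
  sumI (N + 1) (fun I =>
      (∑ i, ⨆ t : {t : ℝ // t₀ ≤ t}, Real.sqrt (Egst t₀ δ 1 (applyI I (Ψ i)) t))
        + ⨆ t : {t : ℝ // t₀ ≤ t}, L2 (applyI I φ t))
    + sumI (N - 3) (fun I => ∑ i, ⨆ p : {p : ℝ × (Fin 3 → ℝ) // t₀ ≤ p.1},
        jb (p.1.1 + rad p.1.2) ^ ((3:ℝ)/2 - δ) * |applyI I (Ψ i) p.1.1 p.1.2|)
    + sumI (N - 7) (fun I => ∑ i, ⨆ p : {p : ℝ × (Fin 3 → ℝ) // t₀ ≤ p.1},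
        jb (p.1.1 + rad p.1.2) ^ ((3:ℝ)/2) * |applyI I (Ψ i) p.1.1 p.1.2|)
    + sumI (N - 9) (fun I => ⨆ p : {p : ℝ × (Fin 3 → ℝ) // t₀ ≤ p.1},
        jb (p.1.1 + rad p.1.2) * jb (p.1.1 - rad p.1.2) ^ ((1:ℝ)/2) * |applyI I φ p.1.1 p.1.2|)

/-- Membership in the solution space `X`. -/
def memX (t₀ δ : ℝ) (N : ℕ) (E₀ E₁ : Fin 3 → (Fin 3 → ℝ) → ℝ) (n₀ n₁ : (Fin 3 → ℝ) → ℝ)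
    (C₁ ε : ℝ) (Ψ : Fin 3 → Fn) (φ : Fn) : Prop :=
  (∀ i, Smth (Ψ i)) ∧ Smth φ ∧
    (∀ i x, Ψ i t₀ x = E₀ i x ∧ pt (Ψ i) t₀ x = E₁ i x) ∧
    (∀ x, φ t₀ x = n₀ x ∧ pt φ t₀ x = n₁ x) ∧
    Xnorm t₀ δ N Ψ φ ≤ C₁ * ε

/-- `(Ψ̃, φ̃) = T(Ψ, φ)`: the solution map of the contraction argument. -/
def isTmap (t₀ : ℝ) (E₀ E₁ : Fin 3 → (Fin 3 → ℝ) → ℝ) (n₀ n₁ : (Fin 3 → ℝ) → ℝ)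
    (Ψ : Fin 3 → Fn) (φ : Fn) (Ψt : Fin 3 → Fn) (φt : Fn) : Prop :=
  (∀ i, Smth (Ψt i)) ∧ Smth φt ∧
    (∀ i t x, t₀ ≤ t → - box (Ψt i) t x + Ψt i t x = -(φ t x * Ψ i t x)) ∧
    (∀ t x, t₀ ≤ t → - box φt t x = lap (fun s y => ∑ i, Ψ i s y ^ 2) t x) ∧
    (∀ i x, Ψt i t₀ x = E₀ i x ∧ pt (Ψt i) t₀ x = E₁ i x) ∧
    (∀ x, φt t₀ x = n₀ x ∧ pt φt t₀ x = n₁ x)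

/-- `L²` norm on the hyperboloid `H_s` (flat integral). -/
def L2H (s : ℝ) (g : Fn) : ℝ := Real.sqrt (∫ x, g (Real.sqrt (s ^ 2 + rad x ^ 2)) x ^ 2)

/-- Hyperboloidal energy `Ẽ_m(s,φ)`. -/
def hypEnergy (m : ℝ) (φ : Fn) (s : ℝ) : ℝ :=
  ∫ x, (((s / Real.sqrt (s ^ 2 + rad x ^ 2)) * pt φ (Real.sqrt (s ^ 2 + rad x ^ 2)) x) ^ 2
    + ∑ a, ub a φ (Real.sqrt (s ^ 2 + rad x ^ 2)) x ^ 2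
    + m ^ 2 * φ (Real.sqrt (s ^ 2 + rad x ^ 2)) x ^ 2)
lemma helper_ineq (ω P Q : Fin 3 → ℝ) (p q : ℝ) (D E : Fin 4 → ℝ)
    (hω : ∑ a, ω a ^ 2 = 1) (hωb : ∀ a, |ω a| ≤ 1)
    (hD0 : D 0 = p) (hD1 : D 1 = P 0) (hD2 : D 2 = P 1) (hD3 : D 3 = P 2)
    (hE0 : E 0 = q) (hE1 : E 1 = Q 0) (hE2 : E 2 = Q 1) (hE3 : E 3 = Q 2) :
    |(-(p * q) + ∑ a, P a * Q a)| + ∑ α : Fin 4, ∑ β : Fin 4, |D α * E β - E α * D β|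
      ≤ 50 * ∑ a, (|ω a * p + P a| * (|q| + ∑ b, |Q b|)
        + |ω a * q + Q a| * (|p| + ∑ b, |P b|)) := by
  set Du : ℝ := |p| + ∑ b, |P b| with hDu
  set Dv : ℝ := |q| + ∑ b, |Q b| with hDv
  set S : ℝ := ∑ a, (|ω a * p + P a| * Dv + |ω a * q + Q a| * Du) with hSdef
  have hDu0 : (0:ℝ) ≤ Du := by positivity
  have hDv0 : (0:ℝ) ≤ Dv := by positivity
  have hS0 : (0:ℝ) ≤ S := Finset.sum_nonneg fun a _ => by positivity
  have hpDu : |p| ≤ Du := le_add_of_nonneg_right (Finset.sum_nonneg fun b _ => abs_nonneg _)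
  have hqDv : |q| ≤ Dv := le_add_of_nonneg_right (Finset.sum_nonneg fun b _ => abs_nonneg _)
  have hPDu : ∀ b, |P b| ≤ Du := fun b =>
    le_add_of_nonneg_of_le (abs_nonneg _)
      (Finset.single_le_sum (fun c _ => abs_nonneg (P c)) (Finset.mem_univ b))
  have hQDv : ∀ b, |Q b| ≤ Dv := fun b =>
    le_add_of_nonneg_of_le (abs_nonneg _)
      (Finset.single_le_sum (fun c _ => abs_nonneg (Q c)) (Finset.mem_univ b))
  have hGU : ∀ a, |ω a * p + P a| ≤ Du := by
    intro a
    calc |ω a * p + P a| ≤ |ω a * p| + |P a| := abs_add_le _ _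
      _ ≤ |p| + ∑ b, |P b| := by
          rw [abs_mul]
          gcongr
          · calc |ω a| * |p| ≤ 1 * |p| := by gcongr; exact hωb a
              _ = |p| := one_mul _
          · exact Finset.single_le_sum (fun c _ => abs_nonneg (P c)) (Finset.mem_univ a)
  have hGV : ∀ a, |ω a * q + Q a| ≤ Dv := by
    intro a
    calc |ω a * q + Q a| ≤ |ω a * q| + |Q a| := abs_add_le _ _
      _ ≤ |q| + ∑ b, |Q b| := by
          rw [abs_mul]
          gcongr
          · calc |ω a| * |q| ≤ 1 * |q| := by gcongr; exact hωb a
              _ = |q| := one_mul _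
          · exact Finset.single_le_sum (fun c _ => abs_nonneg (Q c)) (Finset.mem_univ a)
  have hT : ∀ a, |ω a * p + P a| * Dv + |ω a * q + Q a| * Du ≤ S := fun a =>
    Finset.single_le_sum (f := fun c => |ω c * p + P c| * Dv + |ω c * q + Q c| * Du)
      (fun c _ => by positivity) (Finset.mem_univ a)
  -- bound on the null form
  have key1 : -(p * q) + ∑ a, P a * Q a
      = ∑ a, ((ω a * p + P a) * (ω a * q + Q a) - ω a * (ω a * p + P a) * q
          - ω a * (ω a * q + Q a) * p) := by
    have h : ∀ a : Fin 3, (ω a * p + P a) * (ω a * q + Q a) - ω a * (ω a * p + P a) * q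
        - ω a * (ω a * q + Q a) * p = P a * Q a - ω a ^ 2 * (p * q) := fun a => by ring
    rw [Finset.sum_congr rfl fun a _ => h a, Finset.sum_sub_distrib, ← Finset.sum_mul, hω]
    ring
  have nullb : |(-(p * q) + ∑ a, P a * Q a)| ≤ 2 * S := by
    rw [key1]
    calc |∑ a, ((ω a * p + P a) * (ω a * q + Q a) - ω a * (ω a * p + P a) * q
            - ω a * (ω a * q + Q a) * p)|
        ≤ ∑ a, |(ω a * p + P a) * (ω a * q + Q a) - ω a * (ω a * p + P a) * q
            - ω a * (ω a * q + Q a) * p| := Finset.abs_sum_le_sum_abs _ _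
      _ ≤ ∑ a, (2 * (|ω a * p + P a| * Dv + |ω a * q + Q a| * Du)) := by
          refine Finset.sum_le_sum fun a _ => ?_
          have t1 : |(ω a * p + P a) * (ω a * q + Q a)| ≤ |ω a * p + P a| * Dv := by
            rw [abs_mul]; exact mul_le_mul_of_nonneg_left (hGV a) (abs_nonneg _)
          have t2 : |ω a * (ω a * p + P a) * q| ≤ |ω a * p + P a| * Dv := by
            rw [abs_mul, abs_mul]
            calc |ω a| * |ω a * p + P a| * |q| ≤ 1 * |ω a * p + P a| * Dv := by
                  gcongr <;> first | exact hωb a | exact hqDv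
              _ = |ω a * p + P a| * Dv := by ring
          have t3 : |ω a * (ω a * q + Q a) * p| ≤ |ω a * q + Q a| * Du := by
            rw [abs_mul, abs_mul]
            calc |ω a| * |ω a * q + Q a| * |p| ≤ 1 * |ω a * q + Q a| * Du := by
                  gcongr <;> first | exact hωb a | exact hpDu
              _ = |ω a * q + Q a| * Du := by ring
          have tri : |(ω a * p + P a) * (ω a * q + Q a) - ω a * (ω a * p + P a) * q
              - ω a * (ω a * q + Q a) * p| ≤ |(ω a * p + P a) * (ω a * q + Q a)|
              + |ω a * (ω a * p + P a) * q| + |ω a * (ω a * q + Q a) * p| := by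
            refine (abs_sub _ _).trans ?_
            gcongr <;> exact abs_sub _ _
          have n1 : 0 ≤ |ω a * q + Q a| * Du := by positivity
          have n2 : 0 ≤ |ω a * p + P a| * Dv := by positivity
          linarith
      _ = 2 * S := by rw [hSdef, Finset.mul_sum]
  -- bounds on the antisymmetric products
  have h0b : ∀ b, |p * Q b - q * P b| ≤ S := by
    intro b
    have e : p * Q b - q * P b = p * (ω b * q + Q b) - q * (ω b * p + P b) := by ring
    rw [e]
    calc |p * (ω b * q + Q b) - q * (ω b * p + P b)|
        ≤ |p * (ω b * q + Q b)| + |q * (ω b * p + P b)| := abs_sub _ _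
      _ ≤ Du * |ω b * q + Q b| + Dv * |ω b * p + P b| := by
          rw [abs_mul, abs_mul]; gcongr
      _ = |ω b * p + P b| * Dv + |ω b * q + Q b| * Du := by ring
      _ ≤ S := hT b
  have ha0 : ∀ b, |P b * q - Q b * p| ≤ S := by
    intro b
    rw [show P b * q - Q b * p = -(p * Q b - q * P b) by ring, abs_neg]
    exact h0b b
  have hab : ∀ a b : Fin 3, |P a * Q b - Q a * P b| ≤ 3 * S := by
    intro a b
    have e : P a * Q b - Q a * P b
        = ((ω a * p + P a) * (ω b * q + Q b) - (ω a * q + Q a) * (ω b * p + P b))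
          - ω b * ((ω a * p + P a) * q - (ω a * q + Q a) * p)
          - ω a * (p * (ω b * q + Q b) - q * (ω b * p + P b)) := by ring
    rw [e]
    have t1 : |(ω a * p + P a) * (ω b * q + Q b) - (ω a * q + Q a) * (ω b * p + P b)| ≤ S := by
      calc |(ω a * p + P a) * (ω b * q + Q b) - (ω a * q + Q a) * (ω b * p + P b)|
          ≤ |(ω a * p + P a) * (ω b * q + Q b)| + |(ω a * q + Q a) * (ω b * p + P b)| :=
            abs_sub _ _
        _ ≤ |ω a * p + P a| * Dv + |ω a * q + Q a| * Du := by
            rw [abs_mul, abs_mul]; gcongr <;> first | exact hGV b | exact hGU b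
        _ ≤ S := hT a
    have t2 : |ω b * ((ω a * p + P a) * q - (ω a * q + Q a) * p)| ≤ S := by
      rw [abs_mul]
      calc |ω b| * |(ω a * p + P a) * q - (ω a * q + Q a) * p|
          ≤ 1 * (|(ω a * p + P a) * q| + |(ω a * q + Q a) * p|) := by
            gcongr <;> first | exact hωb b | exact abs_sub _ _
        _ ≤ 1 * (|ω a * p + P a| * Dv + |ω a * q + Q a| * Du) := by
            rw [abs_mul, abs_mul]; gcongr <;> first | exact hqDv | exact hpDu
        _ = |ω a * p + P a| * Dv + |ω a * q + Q a| * Du := one_mul _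
        _ ≤ S := hT a
    have t3 : |ω a * (p * (ω b * q + Q b) - q * (ω b * p + P b))| ≤ S := by
      rw [abs_mul]
      calc |ω a| * |p * (ω b * q + Q b) - q * (ω b * p + P b)|
          ≤ 1 * (|p * (ω b * q + Q b)| + |q * (ω b * p + P b)|) := by
            gcongr <;> first | exact hωb a | exact abs_sub _ _
        _ ≤ 1 * (Du * |ω b * q + Q b| + Dv * |ω b * p + P b|) := by
            rw [abs_mul, abs_mul]; gcongr
        _ = |ω b * p + P b| * Dv + |ω b * q + Q b| * Du := by ring
        _ ≤ S := hT b
    have tri : |((ω a * p + P a) * (ω b * q + Q b) - (ω a * q + Q a) * (ω b * p + P b))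
        - ω b * ((ω a * p + P a) * q - (ω a * q + Q a) * p)
        - ω a * (p * (ω b * q + Q b) - q * (ω b * p + P b))|
        ≤ |(ω a * p + P a) * (ω b * q + Q b) - (ω a * q + Q a) * (ω b * p + P b)|
          + |ω b * ((ω a * p + P a) * q - (ω a * q + Q a) * p)|
          + |ω a * (p * (ω b * q + Q b) - q * (ω b * p + P b))| := by
      refine (abs_sub _ _).trans ?_
      gcongr
      exact abs_sub _ _
    linarith
  -- expand the double sum
  have expand : ∑ α : Fin 4, ∑ β : Fin 4, |D α * E β - E α * D β| ≤ 24 * S := by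
    simp only [Fin.sum_univ_four, hD0, hD1, hD2, hD3, hE0, hE1, hE2, hE3]
    have z0 : |p * q - q * p| = 0 := by rw [show p * q - q * p = 0 by ring, abs_zero]
    have z1 : ∀ b : Fin 3, |P b * Q b - Q b * P b| = 0 := fun b => by
      rw [show P b * Q b - Q b * P b = 0 by ring, abs_zero]
    have := h0b 0; have := h0b 1; have := h0b 2
    have := ha0 0; have := ha0 1; have := ha0 2
    have := hab 0 1; have := hab 0 2; have := hab 1 0
    have := hab 1 2; have := hab 2 0; have := hab 2 1
    have := z1 0; have := z1 1; have := z1 2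
    linarith
  have : 26 * S ≤ 50 * S := by linarith
  calc |(-(p * q) + ∑ a, P a * Q a)| + ∑ α : Fin 4, ∑ β : Fin 4, |D α * E β - E α * D β|
      ≤ 2 * S + 24 * S := add_le_add nullb expand
    _ ≤ 50 * S := by linarith
    _ = 50 * ∑ a, (|ω a * p + P a| * (|q| + ∑ b, |Q b|)
        + |ω a * q + Q a| * (|p| + ∑ b, |P b|)) := rfl

/-- null form estimate via the good derivatives `G_a`. -/
theorem null_form_good_derivatives :
    ∃ C > (0:ℝ), ∀ u v : Fn, Smth u → Smth v →
      ∀ (t : ℝ) (x : Fin 3 → ℝ), rad x ≠ 0 →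
        |(- (pt u t x * pt v t x) + ∑ a, px a u t x * px a v t x)|
            + (∑ α : Fin 4, ∑ β : Fin 4, |pd α u t x * pd β v t x - pd α v t x * pd β u t x|)
          ≤ C * ∑ a, (|Ga a u t x| * absD v t x + |Ga a v t x| * absD u t x) := by
  refine ⟨50, by norm_num, ?_⟩
  intro u v _ _ t x hx
  have hr0 : (0:ℝ) ≤ rad x := Real.sqrt_nonneg _
  have hrpos : (0:ℝ) < rad x := lt_of_le_of_ne hr0 (Ne.symm hx)
  have hsq : rad x ^ 2 = ∑ a, x a ^ 2 := Real.sq_sqrt (Finset.sum_nonneg fun a _ => sq_nonneg _)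
  have hω : ∑ a, (x a / rad x) ^ 2 = 1 := by
    simp only [div_pow]
    rw [← Finset.sum_div, ← hsq, div_self (pow_ne_zero _ hx)]
  have hωb : ∀ a, |x a / rad x| ≤ 1 := by
    intro a
    rw [abs_div, abs_of_nonneg hr0, div_le_one hrpos]
    have h1 : x a ^ 2 ≤ ∑ b, x b ^ 2 :=
      Finset.single_le_sum (fun b _ => sq_nonneg (x b)) (Finset.mem_univ a)
    calc |x a| = Real.sqrt (x a ^ 2) := (Real.sqrt_sq_eq_abs _).symm
      _ ≤ Real.sqrt (∑ b, x b ^ 2) := Real.sqrt_le_sqrt h1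
      _ = rad x := rfl
  have := helper_ineq (fun a => x a / rad x) (fun a => px a u t x) (fun a => px a v t x)
    (pt u t x) (pt v t x) (fun α => pd α u t x) (fun α => pd α v t x)
    hω hωb rfl rfl rfl rfl rfl rfl rfl rfl
  simpa only [Ga, absD] using this
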